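/- arXiv:1305.2336 — 5 statements merged into one kernel-verified Lean document; each statement's English description precedes it below -/
import Mathlib

section
/- If r : ℝ → ℝ is defined by r(v) = sqrt(c₁ * cos(2v) - c₂ * sin(2v)) on an interval where c₁ * cos(2v) - c₂ * sin(2v) > 0, then r satisfies the differential equation (r'(v))² + r(v) * r''(v) + 2 * r(v)² = 0 on that interval. -/
/-! With `f v = c₁ cos 2v - c₂ sin 2v` we have `r ^ 2 = f` and `f'' = -4 f`, so
`r' ^ 2 + r r'' = (r ^ 2)'' / 2 = -2 r ^ 2`. -/

open Filter Topology Real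

theorem deriv_sqrt_sq_add_sqrt_mul_deriv_deriv_sqrt {f f' : ℝ → ℝ} {f'' v : ℝ}
    (hf : ∀ᶠ x in 𝓝 v, HasDerivAt f (f' x) x) (hf' : HasDerivAt f' f'' v) (hv : 0 < f v) :
    deriv (fun x => √(f x)) v ^ 2 + √(f v) * deriv (deriv fun x => √(f x)) v = f'' / 2 := by
  have hpos : ∀ᶠ x in 𝓝 v, 0 < f x :=
    hf.self_of_nhds.continuousAt.eventually (lt_mem_nhds hv)
  have hderiv : deriv (fun x => √(f x)) =ᶠ[𝓝 v] fun x => f' x / (2 * √(f x)) := by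
    filter_upwards [hf, hpos] with x hx hx0
    exact (hx.sqrt hx0.ne').deriv
  have hsqrt : HasDerivAt (fun x => √(f x)) (f' v / (2 * √(f v))) v :=
    hf.self_of_nhds.sqrt hv.ne'
  have hsqrt_pos : 0 < √(f v) := sqrt_pos.mpr hv
  have hsecond : HasDerivAt (fun x => f' x / (2 * √(f x)))
      ((f'' * (2 * √(f v)) - f' v * (2 * (f' v / (2 * √(f v))))) / (2 * √(f v)) ^ 2) v :=
    hf'.div (hsqrt.const_mul 2) (by positivity)
  rw [hderiv.self_of_nhds, hderiv.deriv_eq, hsecond.deriv]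
  field_simp
  rw [sq_sqrt hv.le]
  ring

theorem hasDerivAt_cos_mul_sub_sin_mul (c₁ c₂ ω v : ℝ) :
    HasDerivAt (fun x => c₁ * cos (ω * x) - c₂ * sin (ω * x))
      (-ω * (c₁ * sin (ω * v) + c₂ * cos (ω * v))) v := by
  have hω : HasDerivAt (fun x => ω * x) ω v := by simpa using (hasDerivAt_id v).const_mul ω
  refine (((hasDerivAt_cos _).comp v hω).const_mul c₁ |>.sub
    (((hasDerivAt_sin _).comp v hω).const_mul c₂)).congr_deriv ?_
  ring

theorem hasDerivAt_sin_mul_add_cos_mul (c₁ c₂ ω v : ℝ) :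
    HasDerivAt (fun x => c₁ * sin (ω * x) + c₂ * cos (ω * x))
      (ω * (c₁ * cos (ω * v) - c₂ * sin (ω * v))) v := by
  have hω : HasDerivAt (fun x => ω * x) ω v := by simpa using (hasDerivAt_id v).const_mul ω
  refine (((hasDerivAt_sin _).comp v hω).const_mul c₁ |>.add
    (((hasDerivAt_cos _).comp v hω).const_mul c₂)).congr_deriv ?_
  ring

theorem stmt0 (c₁ c₂ A B : ℝ)
    (r : ℝ → ℝ)
    (hr : ∀ v, r v = Real.sqrt (c₁ * Real.cos (2 * v) - c₂ * Real.sin (2 * v)))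
    (hpos : ∀ v ∈ Set.Ioo A B, c₁ * Real.cos (2 * v) - c₂ * Real.sin (2 * v) > 0) :
    ∀ v ∈ Set.Ioo A B,
      (deriv r v) ^ 2 + r v * deriv (deriv r) v + 2 * (r v) ^ 2 = 0 := by
  intro v hv
  obtain rfl : r = fun x => √(c₁ * cos (2 * x) - c₂ * sin (2 * x)) := funext hr
  have hf'' := (hasDerivAt_sin_mul_add_cos_mul c₁ c₂ 2 v).const_mul (-2)
  rw [deriv_sqrt_sq_add_sqrt_mul_deriv_deriv_sqrt
    (.of_forall (hasDerivAt_cos_mul_sub_sin_mul c₁ c₂ 2)) hf'' (hpos v hv),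
    sq_sqrt (hpos v hv).le]
  ring
end

section
/- If r : ℝ → ℝ is defined by r(v) = 1 / sqrt(c₁ * sin(2v) - c₂ * cos(2v)) on an interval where c₁ * sin(2v) - c₂ * cos(2v) > 0, then r satisfies the differential equation 3 * (r'(v))² - r(v) * r''(v) + 2 * r(v)² = 0 on that interval. -/
/-!
Write `r = g^{-1/2}` with `g v = c₁ sin 2v - c₂ cos 2v`. Then `r' = -½ r³ g'`, and differentiating
once more gives `3 r'² - r r'' = ½ r⁴ g''` for any positive `g`. The sinusoid satisfies
`g'' = -4 g`, and `r² g = 1`, so the right-hand side is `-2 r²`.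
-/

open Real Filter Topology

lemma HasDerivAt.inv_sqrt {g : ℝ → ℝ} {g' w : ℝ} (hg : HasDerivAt g g' w) (hpos : 0 < g w) :
    HasDerivAt (fun x => (√(g x))⁻¹) (-(1 / 2) * (√(g w))⁻¹ ^ 3 * g') w := by
  have hs : √(g w) ≠ 0 := (sqrt_pos.mpr hpos).ne'
  refine (((hasDerivAt_sqrt hpos.ne').comp w hg).inv hs).congr_deriv ?_
  simp only [Function.comp_apply]
  field_simp

lemma hasDerivAt_sin_two_mul_add_cos_two_mul (a b w : ℝ) :
    HasDerivAt (fun x => a * sin (2 * x) + b * cos (2 * x))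
      (-2 * b * sin (2 * w) + 2 * a * cos (2 * w)) w := by
  have h2 : HasDerivAt (fun x : ℝ => 2 * x) 2 w := by
    simpa using (hasDerivAt_id w).const_mul 2
  refine ((((hasDerivAt_sin _).comp w h2).const_mul a).add
    (((hasDerivAt_cos _).comp w h2).const_mul b)).congr_deriv ?_
  ring

lemma three_mul_deriv_sq_sub_mul_deriv_deriv_inv_sqrt {g g' : ℝ → ℝ} {g'' v : ℝ} {U : Set ℝ}
    (hU : IsOpen U) (hv : v ∈ U) (hpos : ∀ w ∈ U, 0 < g w)
    (hg : ∀ w ∈ U, HasDerivAt g (g' w) w) (hg' : HasDerivAt g' g'' v) :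
    let r := fun x => (√(g x))⁻¹
    3 * deriv r v ^ 2 - r v * deriv (deriv r) v = r v ^ 4 * g'' / 2 := by
  intro r
  have hr : ∀ w ∈ U, HasDerivAt r (-(1 / 2) * r w ^ 3 * g' w) w :=
    fun w hw => (hg w hw).inv_sqrt (hpos w hw)
  have hderiv : deriv r =ᶠ[𝓝 v] fun w => -(1 / 2) * r w ^ 3 * g' w :=
    eventually_of_mem (hU.mem_nhds hv) fun w hw => (hr w hw).deriv
  have hr'' : HasDerivAt (fun w => -(1 / 2) * r w ^ 3 * g' w)
      (-(3 / 2) * r v ^ 2 * (-(1 / 2) * r v ^ 3 * g' v) * g' v - 1 / 2 * r v ^ 3 * g'') v :=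
    ((((hr v hv).pow 3).const_mul (-(1 / 2))).mul hg').congr_deriv <| by
      simp only [Pi.pow_apply]; ring
  rw [hderiv.deriv_eq, hr''.deriv, (hr v hv).deriv]
  ring

theorem stmt1 (c₁ c₂ A B : ℝ)
    (r : ℝ → ℝ)
    (hr : ∀ v, r v = 1 / Real.sqrt (c₁ * Real.sin (2 * v) - c₂ * Real.cos (2 * v)))
    (hpos : ∀ v ∈ Set.Ioo A B, c₁ * Real.sin (2 * v) - c₂ * Real.cos (2 * v) > 0) :
    ∀ v ∈ Set.Ioo A B,
      3 * (deriv r v) ^ 2 - r v * deriv (deriv r) v + 2 * (r v) ^ 2 = 0 := by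
  intro v hv
  set g := fun x => c₁ * sin (2 * x) + -c₂ * cos (2 * x)
  have hg_eq : ∀ x, g x = c₁ * sin (2 * x) - c₂ * cos (2 * x) := fun x => by ring
  obtain rfl : r = fun x => (√(g x))⁻¹ := funext fun x => by rw [hr, hg_eq, one_div]
  have hgpos : ∀ w ∈ Set.Ioo A B, 0 < g w := fun w hw => by rw [hg_eq]; exact hpos w hw
  have hgv := hgpos v hv
  have hg'' := hasDerivAt_sin_two_mul_add_cos_two_mul (-2 * -c₂) (2 * c₁) v
  have hode := three_mul_deriv_sq_sub_mul_deriv_deriv_inv_sqrt isOpen_Ioo hv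
    hgpos (fun w _ => hasDerivAt_sin_two_mul_add_cos_two_mul _ _ w) hg''
  have hrg : (√(g v))⁻¹ ^ 2 * g v = 1 := by
    rw [inv_pow, sq_sqrt hgv.le, inv_mul_cancel₀ hgv.ne']
  simp only at hode ⊢
  rw [hode]
  linear_combination (-2 * (√(g v))⁻¹ ^ 2) * hrg
end

section
/- Let r : ℝ → ℝ be smooth with r(v) > 0, and define a(v) = 1 / sqrt(r(v)² + r'(v)²) and b(v) = (2 r'(v)² - r(v) r''(v) + r(v)²) / (r(v)² + r'(v)²)^(3/2). Then a(v) = b(v) for all v if and only if r(v) r''(v) = r'(v)² for all v, whose positive solutions are exactly r(v) = c₁ * exp(c₂ v) with c₁ > 0. -/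
theorem stmt2 (r : ℝ → ℝ) (hsmooth : ContDiff ℝ (⊤ : ℕ∞) r) (hpos : ∀ v, r v > 0)
    (a b : ℝ → ℝ)
    (ha : ∀ v, a v = 1 / Real.sqrt ((r v) ^ 2 + (deriv r v) ^ 2))
    (hb : ∀ v, b v = (2 * (deriv r v) ^ 2 - r v * deriv (deriv r) v + (r v) ^ 2) /
        ((r v) ^ 2 + (deriv r v) ^ 2) ^ ((3 : ℝ) / 2)) :
    ((∀ v, a v = b v) ↔ (∀ v, r v * deriv (deriv r) v = (deriv r v) ^ 2)) ∧
    ((∀ v, r v * deriv (deriv r) v = (deriv r v) ^ 2) ↔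
      ∃ c₁ c₂ : ℝ, c₁ > 0 ∧ ∀ v, r v = c₁ * Real.exp (c₂ * v)) := by
  have hQpos : ∀ v, (0:ℝ) < (r v) ^ 2 + (deriv r v) ^ 2 := fun v => by
    have := hpos v; positivity
  have hsq : ∀ v, (0:ℝ) < Real.sqrt ((r v) ^ 2 + (deriv r v) ^ 2) := fun v =>
    Real.sqrt_pos.mpr (hQpos v)
  have hrpow : ∀ v, ((r v) ^ 2 + (deriv r v) ^ 2) ^ ((3 : ℝ) / 2)
      = (Real.sqrt ((r v) ^ 2 + (deriv r v) ^ 2)) ^ (3:ℕ) := by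
    intro v
    rw [Real.sqrt_eq_rpow, ← Real.rpow_natCast (_ ^ (1/2:ℝ)) 3,
      ← Real.rpow_mul (hQpos v).le]
    norm_num
  have key : ∀ v, a v = b v ↔ r v * deriv (deriv r) v = (deriv r v) ^ 2 := by
    intro v
    have hs := hsq v
    have hs2 : Real.sqrt ((r v) ^ 2 + (deriv r v) ^ 2) ^ 2
        = (r v) ^ 2 + (deriv r v) ^ 2 := Real.sq_sqrt (hQpos v).le
    have hcube : Real.sqrt ((r v) ^ 2 + (deriv r v) ^ 2) ^ (3:ℕ)
        = ((r v) ^ 2 + (deriv r v) ^ 2) * Real.sqrt ((r v) ^ 2 + (deriv r v) ^ 2) := by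
      rw [pow_succ, hs2]
    rw [ha v, hb v, hrpow v, div_eq_div_iff hs.ne' (by positivity), hcube]
    constructor
    · intro h
      have h2 : (r v) ^ 2 + (deriv r v) ^ 2
          = 2 * (deriv r v) ^ 2 - r v * deriv (deriv r) v + (r v) ^ 2 :=
        mul_right_cancel₀ hs.ne' (by linarith)
      linarith
    · intro h
      have hN : 2 * (deriv r v) ^ 2 - r v * deriv (deriv r) v + (r v) ^ 2
          = (r v) ^ 2 + (deriv r v) ^ 2 := by linarith
      rw [hN]; ring
  constructor
  · exact ⟨fun h v => (key v).mp (h v), fun h v => (key v).mpr (h v)⟩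
  · constructor
    · intro h
      have hdr : Differentiable ℝ r := hsmooth.differentiable (by simp)
      have hdr' : Differentiable ℝ (deriv r) := by
        have h2 : ContDiff ℝ ((⊤:ℕ∞) : WithTop ℕ∞) r := hsmooth.of_le (by simp)
        exact ((contDiff_infty_iff_deriv.mp h2).2).differentiable (by simp)
      set c₂ := deriv r 0 / r 0 with hc₂
      have hfd : Differentiable ℝ (fun v => deriv r v / r v) :=
        fun v => (hdr' v).div (hdr v) (ne_of_gt (hpos v))
      have hf0 : ∀ v, deriv (fun v => deriv r v / r v) v = 0 := by
        intro v
        rw [deriv_fun_div (hdr' v) (hdr v) (ne_of_gt (hpos v)), div_eq_zero_iff]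
        left
        linear_combination (h v)
      have hr' : ∀ v, deriv r v = c₂ * r v := by
        intro v
        have hfc : deriv r v / r v = c₂ := is_const_of_deriv_eq_zero hfd hf0 v 0
        rw [div_eq_iff (ne_of_gt (hpos v))] at hfc
        linarith
      refine ⟨r 0, c₂, hpos 0, ?_⟩
      have hgd : Differentiable ℝ (fun v => r v * Real.exp (-(c₂ * v))) := by
        intro v
        exact (hdr v).mul (((differentiable_id.const_mul c₂).neg.exp) v)
      have hg0 : ∀ v, deriv (fun v => r v * Real.exp (-(c₂ * v))) v = 0 := by
        intro v
        have he : HasDerivAt (fun v => Real.exp (-(c₂ * v))) (-c₂ * Real.exp (-(c₂ * v))) v := by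
          have h1 : HasDerivAt (fun v : ℝ => -(c₂ * v)) (-c₂) v := by
            simpa using ((hasDerivAt_id v).const_mul c₂).fun_neg
          simpa [mul_comm] using h1.exp
        have hrv : HasDerivAt r (deriv r v) v := (hdr v).hasDerivAt
        rw [(hrv.fun_mul he).deriv, hr' v]; ring
      intro v
      have hgc : r v * Real.exp (-(c₂ * v)) = r 0 * Real.exp (-(c₂ * 0)) :=
        is_const_of_deriv_eq_zero hgd hg0 v 0
      have hE : Real.exp (-(c₂ * v)) * Real.exp (c₂ * v) = 1 := by
        rw [← Real.exp_add]; simp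
      calc r v = r v * (Real.exp (-(c₂ * v)) * Real.exp (c₂ * v)) := by rw [hE, mul_one]
        _ = (r v * Real.exp (-(c₂ * v))) * Real.exp (c₂ * v) := by ring
        _ = r 0 * Real.exp (c₂ * v) := by rw [hgc]; simp
    · rintro ⟨c₁, c₂, hc₁, hr⟩
      have hre : r = fun v => c₁ * Real.exp (c₂ * v) := funext hr
      subst hre
      intro v
      have he : ∀ w : ℝ, HasDerivAt (fun v : ℝ => c₁ * Real.exp (c₂ * v))
          (c₁ * c₂ * Real.exp (c₂ * w)) w := by
        intro w
        have h1 : HasDerivAt (fun v : ℝ => c₂ * v) c₂ w := by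
          simpa using (hasDerivAt_id w).const_mul c₂
        have := (h1.exp).const_mul c₁
        exact this.congr_deriv (by ring)
      have hd1 : deriv (fun v : ℝ => c₁ * Real.exp (c₂ * v))
          = fun w => c₁ * c₂ * Real.exp (c₂ * w) := funext fun w => (he w).deriv
      rw [hd1]
      have he2 : HasDerivAt (fun w : ℝ => c₁ * c₂ * Real.exp (c₂ * w))
          (c₁ * c₂ * c₂ * Real.exp (c₂ * v)) v := by
        have h1 : HasDerivAt (fun v : ℝ => c₂ * v) c₂ v := by
          simpa using (hasDerivAt_id v).const_mul c₂
        have := (h1.exp).const_mul (c₁ * c₂)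
        exact this.congr_deriv (by ring)
      rw [he2.deriv]
      ring
end

section
/- Let r : ℝ → ℝ be smooth with r(v)² + r'(v)² > 0, and set a(v) = 1/sqrt(r² + r'²), b(v) = (2r'² - r r'' + r²)/(r² + r'²)^(3/2). If r(v) = c₁ exp(c₂ v) with c₁ > 0, then a(v) * b(v) - a(v)² = 0 for all v. -/
theorem stmt3 (r : ℝ → ℝ) (hsmooth : ContDiff ℝ (⊤ : ℕ∞) r)
    (hpos : ∀ v, (r v) ^ 2 + (deriv r v) ^ 2 > 0)
    (a b : ℝ → ℝ)
    (ha : ∀ v, a v = 1 / Real.sqrt ((r v) ^ 2 + (deriv r v) ^ 2))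
    (hb : ∀ v, b v = (2 * (deriv r v) ^ 2 - r v * deriv (deriv r) v + (r v) ^ 2) /
        ((r v) ^ 2 + (deriv r v) ^ 2) ^ ((3 : ℝ) / 2))
    (c₁ c₂ : ℝ) (hc₁ : c₁ > 0)
    (hr : ∀ v, r v = c₁ * Real.exp (c₂ * v)) :
    ∀ v, a v * b v - (a v) ^ 2 = 0 := by
  have hre : r = fun v => c₁ * Real.exp (c₂ * v) := funext hr
  have hd : deriv r = fun v => c₁ * c₂ * Real.exp (c₂ * v) := by
    funext v
    rw [hre]
    have h1 : HasDerivAt (fun v : ℝ => c₂ * v) c₂ v := by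
      simpa using (hasDerivAt_id v).const_mul c₂
    have h2 := (h1.exp.const_mul c₁)
    rw [h2.deriv]; ring
  have hdd : deriv (deriv r) = fun v => c₁ * c₂ ^ 2 * Real.exp (c₂ * v) := by
    funext v
    rw [hd]
    have h1 : HasDerivAt (fun v : ℝ => c₂ * v) c₂ v := by
      simpa using (hasDerivAt_id v).const_mul c₂
    have h2 := (h1.exp.const_mul (c₁ * c₂))
    rw [h2.deriv]; ring
  intro v
  have hE : Real.exp (c₂ * v) > 0 := Real.exp_pos _
  set s : ℝ := (r v) ^ 2 + (deriv r v) ^ 2 with hs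
  have hspos : s > 0 := hpos v
  have hN : 2 * (deriv r v) ^ 2 - r v * deriv (deriv r) v + (r v) ^ 2 = s := by
    rw [hs, hr v, congrFun hd v, congrFun hdd v]; ring
  have hsqrt : Real.sqrt s > 0 := Real.sqrt_pos.mpr hspos
  have h32 : s ^ ((3 : ℝ) / 2) = s * Real.sqrt s := by
    rw [show ((3 : ℝ) / 2) = 1 + 1 / 2 by norm_num, Real.rpow_add hspos,
      Real.rpow_one, Real.sqrt_eq_rpow]
  rw [ha, hb, hN, ← hs, h32]
  have hsq : Real.sqrt s * Real.sqrt s = s := Real.mul_self_sqrt hspos.le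
  field_simp
  nlinarith [hsq, hsqrt, hspos]
end

section
/- For any 2×2 real symmetric matrices A₁ = ![![a, c], ![c, b]] and A₂ = ![![d, e], ![e, f]], the Wintgen inequality holds for this pair: det A₁ + det A₂ + |entry (0,1) of (A₁A₂ - A₂A₁)| ≤ ((a+b)/2)² + ((d+f)/2)². -/
/-!
Writing `K_N = e (a - b) - c (d - f)`, the defect `‖H‖² - K` is the sum of squares
`((a - b) / 2)² + e² + c² + ((d - f) / 2)²`, and each of the two products in `K_N` is bounded by
the matching pair of squares via `2 |x y| ≤ x² + y²`.
-/

theorem Matrix.commutator_fin_two_apply_zero_one {R : Type*} [CommRing R]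
    (a b c d a' b' c' d' : R) :
    (!![a, b; c, d] * !![a', b'; c', d'] - !![a', b'; c', d'] * !![a, b; c, d]) 0 1 =
      b' * (a - d) - b * (a' - d') := by
  simp only [Matrix.sub_apply, Matrix.mul_apply, Fin.sum_univ_two, Matrix.of_apply,
    Matrix.cons_val', Matrix.cons_val_zero, Matrix.cons_val_one, Matrix.empty_val',
    Matrix.cons_val_fin_one]
  ring

section OrderedField

variable {K : Type*} [Field K] [LinearOrder K] [IsStrictOrderedRing K]

theorem abs_two_mul_le_add_sq (x y : K) : |2 * x * y| ≤ x ^ 2 + y ^ 2 := by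
  simpa only [abs_mul, abs_two, sq_abs, mul_assoc] using two_mul_le_add_sq |x| |y|

theorem wintgen_fin_two_symm (a b c d e f : K) :
    (a * b - c * c) + (d * f - e * e) + |e * (a - b) - c * (d - f)| ≤
      ((a + b) / 2) ^ 2 + ((d + f) / 2) ^ 2 := by
  have h₁ : |e * (a - b)| ≤ ((a - b) / 2) ^ 2 + e ^ 2 := by
    convert abs_two_mul_le_add_sq ((a - b) / 2) e using 2
    ring
  have h₂ : |c * (d - f)| ≤ c ^ 2 + ((d - f) / 2) ^ 2 := by
    convert abs_two_mul_le_add_sq c ((d - f) / 2) using 2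
    ring
  have defect : ((a + b) / 2) ^ 2 + ((d + f) / 2) ^ 2 - ((a * b - c * c) + (d * f - e * e)) =
      (((a - b) / 2) ^ 2 + e ^ 2) + (c ^ 2 + ((d - f) / 2) ^ 2) := by
    ring
  linarith [abs_sub (e * (a - b)) (c * (d - f))]

end OrderedField

theorem stmt6 (a b c d e f : ℝ)
    (A₁ A₂ : Matrix (Fin 2) (Fin 2) ℝ)
    (hA₁ : A₁ = !![a, c; c, b])
    (hA₂ : A₂ = !![d, e; e, f]) :
    A₁.det + A₂.det + |(A₁ * A₂ - A₂ * A₁) 0 1| ≤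
      ((a + b) / 2) ^ 2 + ((d + f) / 2) ^ 2 := by
  subst hA₁ hA₂
  rw [Matrix.det_fin_two_of, Matrix.det_fin_two_of, Matrix.commutator_fin_two_apply_zero_one]
  exact wintgen_fin_two_symm a b c d e f
end
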